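/- arXiv:0906.4609 — 2 statements merged into one kernel-verified Lean document; each statement's English description precedes it below -/
import Mathlib

section
/- If a finite simple graph G has a maximum independent set that is also a critical independent set, then G is a König–Egerváry graph. -/
namespace KEPaper

open SimpleGraph

variable {V : Type*}

/-- `nbhd G S` is the set of vertices having a neighbor in `S`. -/
def nbhd (G : SimpleGraph V) (S : Set V) : Set V := {v | ∃ w ∈ S, G.Adj v w}

/-- `S` is an independent set of `G`: no two vertices of `S` are adjacent. -/
def IsIndep (G : SimpleGraph V) (S : Set V) : Prop :=
  S.Pairwise fun u v => ¬ G.Adj u v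

/-- The independence number `α(G)`: maximum cardinality of an independent set. -/
noncomputable def indepNum (G : SimpleGraph V) : ℕ :=
  sSup {n | ∃ S : Set V, IsIndep G S ∧ S.ncard = n}

/-- The matching number `μ(G)`: maximum cardinality of a matching. -/
noncomputable def matchNum (G : SimpleGraph V) : ℕ :=
  sSup {n | ∃ M : Subgraph G, M.IsMatching ∧ M.edgeSet.ncard = n}

/-- `S` is a maximum independent set of `G`. -/
def IsMaxIndep (G : SimpleGraph V) (S : Set V) : Prop :=
  IsIndep G S ∧ S.ncard = indepNum G

/-- The critical difference `d(G) = max {|S| - |N(S)| : S independent}`. -/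
noncomputable def critDiff (G : SimpleGraph V) : ℤ :=
  sSup {d : ℤ | ∃ S : Set V, IsIndep G S ∧ d = (S.ncard : ℤ) - ((nbhd G S).ncard : ℤ)}

/-- `S` is a critical independent set: independent with `|S| - |N(S)| = d(G)`. -/
def IsCritIndep (G : SimpleGraph V) (S : Set V) : Prop :=
  IsIndep G S ∧ (S.ncard : ℤ) - ((nbhd G S).ncard : ℤ) = critDiff G

/-- `core G` is the intersection of all maximum independent sets of `G`. -/
def core (G : SimpleGraph V) : Set V := ⋂ S ∈ {S : Set V | IsMaxIndep G S}, S

/-- `G` is a König–Egerváry graph: `|V(G)| = α(G) + μ(G)`. -/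
def KoenigEgervary (G : SimpleGraph V) : Prop :=
  Nat.card V = indepNum G + matchNum G

/-- `A` is a local maximum independent set of `G`: it is a maximum independent
set of the subgraph of `G` induced by `N[A] = A ∪ N(A)`. -/
def IsLocalMaxIndep (G : SimpleGraph V) (A : Set V) : Prop :=
  IsMaxIndep (G.induce (A ∪ nbhd G A)) {x : ↥(A ∪ nbhd G A) | ↑x ∈ A}

end KEPaper

/-! Let `S` be a maximum independent set that is also critical. Maximality gives `N(S) = V \ S`.
Criticality gives Hall's condition for matching `N(S)` into `S`: for `T ⊆ N(S)` the independent
set `S \ N(T)` has its neighbourhood inside `N(S) \ T`, so `|T| ≤ |S ∩ N(T)|`. The resulting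
matching has `|V \ S| = |V| - α(G)` edges, and no matching is larger because `V \ S` is a vertex
cover. -/

namespace SimpleGraph

variable {V : Type*} {G : SimpleGraph V}

lemma exists_isMatching_ncard_edgeSet_eq {T : Set V} {f : T → V} (hf : f.Injective)
    (hfT : ∀ x : T, f x ∉ T) (hadj : ∀ x : T, G.Adj x (f x)) :
    ∃ M : G.Subgraph, M.IsMatching ∧ M.edgeSet.ncard = T.ncard := by
  refine ⟨⨆ x : T, G.subgraphOfAdj (hadj x), .iSup (fun x ↦ .subgraphOfAdj _) ?_, ?_⟩
  · intro x y hxy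
    simp only [support_subgraphOfAdj, Set.disjoint_insert_left,
      Set.disjoint_insert_right, Set.disjoint_singleton, Set.mem_insert_iff,
      Set.mem_singleton_iff, not_or]
    exact ⟨⟨Subtype.coe_injective.ne hxy.symm, fun h ↦ hfT x (h ▸ y.2)⟩,
      fun h ↦ hfT y (h ▸ x.2), hf.ne hxy⟩
  · have hinj : Function.Injective fun x : T ↦ s((x : V), f x) := by
      intro x y hxy
      rcases Sym2.eq_iff.mp hxy with ⟨h, -⟩ | ⟨h, -⟩
      · exact Subtype.ext h
      · exact absurd (h ▸ x.2) (hfT y)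
    simp only [Subgraph.edgeSet_iSup, edgeSet_subgraphOfAdj, ← Set.range_eq_iUnion]
    rw [Set.ncard_range_of_injective hinj, Nat.card_coe_set_eq]

lemma Subgraph.IsMatching.ncard_edgeSet_le [Finite V] {M : G.Subgraph} (hM : M.IsMatching)
    {C : Set V} (hC : G.IsVertexCover C) : M.edgeSet.ncard ≤ C.ncard := by
  let g : ↥(M.verts ∩ C) → M.edgeSet := fun v ↦ hM.toEdge ⟨v, v.2.1⟩
  have hg : g.Surjective := by
    rintro ⟨e, he⟩
    induction e using Sym2.ind with
    | _ a b =>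
      rcases hC (M.adj_sub he) with ha | hb
      · exact ⟨⟨a, he.fst_mem, ha⟩, hM.toEdge_eq_of_adj he⟩
      · exact ⟨⟨b, he.snd_mem, hb⟩,
          (hM.toEdge_eq_toEdge_of_adj he).symm.trans (hM.toEdge_eq_of_adj he)⟩
  calc M.edgeSet.ncard = Nat.card M.edgeSet := (Nat.card_coe_set_eq _).symm
    _ ≤ Nat.card ↥(M.verts ∩ C) := Nat.card_le_card_of_surjective g hg
    _ = (M.verts ∩ C).ncard := Nat.card_coe_set_eq _
    _ ≤ C.ncard := Set.ncard_le_ncard Set.inter_subset_right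

end SimpleGraph

namespace KEPaper

open SimpleGraph

variable {V : Type*}

section

variable {G : SimpleGraph V} {S T : Set V}

lemma matchNum_eq_of_isMatching_of_isVertexCover [Finite V] {M : G.Subgraph} (hM : M.IsMatching)
    {C : Set V} (hC : G.IsVertexCover C) (hMC : M.edgeSet.ncard = C.ncard) :
    matchNum G = C.ncard := by
  have hle : ∀ n ∈ {n | ∃ M : G.Subgraph, M.IsMatching ∧ M.edgeSet.ncard = n},
      n ≤ C.ncard := by
    rintro _ ⟨M', hM', rfl⟩
    exact hM'.ncard_edgeSet_le hC
  exact le_antisymm (csSup_le ⟨_, M, hM, rfl⟩ hle)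
    (hMC ▸ le_csSup ⟨_, hle⟩ ⟨M, hM, rfl⟩)

lemma exists_injective_adj_of_forall_ncard_le [Finite V]
    (hall : ∀ A ⊆ T, A.ncard ≤ (S ∩ nbhd G A).ncard) :
    ∃ f : T → S, f.Injective ∧ ∀ x : T, G.Adj x (f x) := by
  classical
  have := Fintype.ofFinite S
  refine (Fintype.all_card_le_filter_rel_iff_exists_injective
    fun (x : T) (y : S) ↦ G.Adj x y).mp fun A ↦ ?_
  have himage : S ∩ nbhd G (Subtype.val '' (A : Set T)) =
      Subtype.val '' ((({b | ∃ a ∈ A, G.Adj a b} : Finset S)) : Set S) := by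
    ext v
    simp [nbhd, G.adj_comm v, and_comm]
  have hA := hall _ (Subtype.coe_image_subset T A)
  rwa [himage, Set.ncard_image_of_injective _ Subtype.val_injective,
    Set.ncard_image_of_injective _ Subtype.val_injective, Set.ncard_coe_finset,
    Set.ncard_coe_finset] at hA

lemma IsIndep.ncard_le_indepNum [Finite V] (hS : IsIndep G S) : S.ncard ≤ indepNum G :=
  le_csSup ⟨Nat.card V, by rintro _ ⟨A, -, rfl⟩; exact Set.ncard_le_card A⟩ ⟨S, hS, rfl⟩

lemma IsIndep.ncard_sub_ncard_nbhd_le_critDiff [Finite V] (hS : IsIndep G S) :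
    (S.ncard : ℤ) - (nbhd G S).ncard ≤ critDiff G := by
  refine le_csSup ⟨Nat.card V, ?_⟩ ⟨S, hS, rfl⟩
  rintro _ ⟨A, -, rfl⟩
  have := Set.ncard_le_card A
  omega

lemma IsIndep.disjoint_nbhd (hS : IsIndep G S) : Disjoint S (nbhd G S) :=
  Set.disjoint_left.mpr fun _ hv ⟨_, hw, hvw⟩ ↦ hS hv hw hvw.ne hvw

lemma IsMaxIndep.nbhd_eq_compl [Finite V] (hS : IsMaxIndep G S) : nbhd G S = Sᶜ := by
  refine subset_antisymm hS.1.disjoint_nbhd.subset_compl_left fun v hv ↦ ?_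
  by_contra hvN
  have : Std.Symm fun u w : V ↦ ¬G.Adj u w := ⟨fun _ _ h h' ↦ h h'.symm⟩
  have hind : IsIndep G (insert v S) :=
    hS.1.insert_of_symm fun w hw _ hvw ↦ hvN ⟨w, hw, hvw⟩
  have := hind.ncard_le_indepNum
  rw [Set.ncard_insert_of_notMem hv, hS.2] at this
  omega

lemma IsCritIndep.ncard_le_ncard_inter_nbhd [Finite V] (hS : IsCritIndep G S)
    (hT : T ⊆ nbhd G S) : T.ncard ≤ (S ∩ nbhd G T).ncard := by
  set A := S \ nbhd G T
  have hNA_sub : nbhd G A ⊆ nbhd G S \ T := by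
    rintro v ⟨a, ⟨haS, haT⟩, hva⟩
    exact ⟨⟨a, haS, hva⟩, fun hvT ↦ haT ⟨v, hvT, hva.symm⟩⟩
  have hA : (S ∩ nbhd G T).ncard + A.ncard = S.ncard :=
    Set.ncard_inter_add_ncard_sdiff_eq_ncard S _
  have hNA : (nbhd G A).ncard + T.ncard ≤ (nbhd G S).ncard :=
    calc _ ≤ (nbhd G S \ T).ncard + T.ncard :=
          Nat.add_le_add_right (Set.ncard_le_ncard hNA_sub) _
      _ = _ := Set.ncard_sdiff_add_ncard_of_subset hT
  have hAind : IsIndep G A := hS.1.mono Set.sdiff_subset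
  have hcrit := hAind.ncard_sub_ncard_nbhd_le_critDiff
  rw [← hS.2] at hcrit
  omega

lemma IsCritIndep.exists_isMatching_ncard_edgeSet_eq_ncard_nbhd [Finite V]
    (hS : IsCritIndep G S) :
    ∃ M : G.Subgraph, M.IsMatching ∧ M.edgeSet.ncard = (nbhd G S).ncard := by
  obtain ⟨f, hf, hadj⟩ :=
    exists_injective_adj_of_forall_ncard_le fun _ hA ↦ hS.ncard_le_ncard_inter_nbhd hA
  exact exists_isMatching_ncard_edgeSet_eq (Subtype.val_injective.comp hf)
    (fun x ↦ Set.disjoint_left.mp hS.1.disjoint_nbhd (f x).2) hadj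

end

/-- If a finite simple graph `G` has a maximum independent set that is also a
critical independent set, then `G` is a König–Egerváry graph. -/
theorem KE_of_exists_maxIndep_critIndep [Finite V] (G : SimpleGraph V)
    (h : ∃ S : Set V, IsMaxIndep G S ∧ IsCritIndep G S) :
    KoenigEgervary G := by
  obtain ⟨S, hmax, hcrit⟩ := h
  obtain ⟨M, hM, hMcard⟩ := hcrit.exists_isMatching_ncard_edgeSet_eq_ncard_nbhd
  rw [hmax.nbhd_eq_compl] at hMcard
  rw [KoenigEgervary, matchNum_eq_of_isMatching_of_isVertexCover hM
    (isVertexCover_compl.mpr hmax.1) hMcard, ← hmax.2, Set.ncard_add_ncard_compl]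

end KEPaper
end

section
/- If G is a finite König–Egerváry graph, then α(G) + |⋂{V(G) − S : S a maximum independent set of G}| = μ(G) + |core(G)|. -/
namespace SimpleGraph.Subgraph

variable {V : Type*} {G : SimpleGraph V} {M : G.Subgraph} {v w : V}

-- Unmatched vertices are fixed, so that for a matching `partner` is an involution of all of `V`.
open Classical in
noncomputable def partner (M : G.Subgraph) (v : V) : V :=
  if h : ∃ w, M.Adj v w then h.choose else v

theorem partner_eq_self (hv : v ∉ M.verts) : M.partner v = v :=
  dif_neg fun ⟨_, hw⟩ => hv (M.edge_vert hw)

namespace IsMatching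

theorem partner_eq (hM : M.IsMatching) (h : M.Adj v w) : M.partner v = w := by
  have hex : ∃ w, M.Adj v w := ⟨w, h⟩
  rw [partner, dif_pos hex]
  exact hM.eq_of_adj_left hex.choose_spec h

theorem adj_partner (hM : M.IsMatching) (hv : v ∈ M.verts) : M.Adj v (M.partner v) := by
  obtain ⟨w, hw, -⟩ := hM hv
  rwa [hM.partner_eq hw]

theorem partner_involutive (hM : M.IsMatching) : Function.Involutive M.partner := by
  intro v
  by_cases hv : v ∈ M.verts
  · exact hM.partner_eq (hM.adj_partner hv).symm
  · rw [partner_eq_self hv, partner_eq_self hv]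

theorem ncard_preimage_partner (hM : M.IsMatching) (T : Set V) :
    (M.partner ⁻¹' T).ncard = T.ncard :=
  Set.ncard_preimage_of_injective_subset_range hM.partner_involutive.injective
    (hM.partner_involutive.surjective.range_eq ▸ Set.subset_univ T)

variable {T : Set V}

theorem image_mk_partner_eq_edgeSet (hM : M.IsMatching)
    (hT : ∀ ⦃v w⦄, M.Adj v w → v ∈ T ∨ w ∈ T) :
    (fun v => s(v, M.partner v)) '' (T ∩ M.verts) = M.edgeSet := by
  refine subset_antisymm ?_ fun e he => ?_
  · rintro _ ⟨v, ⟨-, hv⟩, rfl⟩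
    exact hM.adj_partner hv
  · induction e with
    | _ v w =>
      rw [Subgraph.mem_edgeSet] at he
      rcases hT he with hv | hw
      · exact ⟨v, ⟨hv, M.edge_vert he⟩, by simp only [hM.partner_eq he]⟩
      · exact ⟨w, ⟨hw, M.edge_vert he.symm⟩, by simp only [hM.partner_eq he.symm, Sym2.eq_swap]⟩

/-- `v ↦ s(v, partner v)` maps `T ∩ M.verts` onto the edges of `M`; the bound on `|T|` makes it
injective and forces `T ⊆ M.verts`, so each edge has exactly one endpoint in `T`. -/
theorem preimage_partner_eq_of_ncard_le [Finite V] (hM : M.IsMatching)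
    (hT : ∀ ⦃v w⦄, M.Adj v w → v ∈ T ∨ w ∈ T) (hcard : T.ncard ≤ M.edgeSet.ncard) :
    M.partner ⁻¹' T = Tᶜ ∩ M.verts := by
  set f : V → Sym2 V := fun v => s(v, M.partner v)
  have himage : f '' (T ∩ M.verts) = M.edgeSet := hM.image_mk_partner_eq_edgeSet hT
  have hle_image : M.edgeSet.ncard ≤ (T ∩ M.verts).ncard := himage ▸ Set.ncard_image_le
  have hle_inter : (T ∩ M.verts).ncard ≤ T.ncard := Set.ncard_inter_le_ncard_left _ _
  have hsub : T ⊆ M.verts := Set.inter_eq_left.mp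
    (Set.eq_of_subset_of_ncard_le Set.inter_subset_left (by omega))
  have hinj : Set.InjOn f (T ∩ M.verts) := Set.injOn_of_ncard_image_eq (by rw [himage]; omega)
  ext v
  by_cases hv : v ∈ M.verts
  · have hadj := hM.adj_partner hv
    simp only [Set.mem_preimage, Set.mem_inter_iff, Set.mem_compl_iff, hv, and_true]
    refine ⟨fun hpv hvT => G.ne_of_adj (M.adj_sub hadj) ?_, fun hvT => (hT hadj).resolve_left hvT⟩
    refine hinj ⟨hvT, hv⟩ ⟨hpv, M.edge_vert hadj.symm⟩ ?_
    simp only [f, hM.partner_involutive v, Sym2.eq_swap]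
  · simp only [Set.mem_preimage, partner_eq_self hv, Set.mem_inter_iff, hv, and_false,
      iff_false]
    exact fun hvT => hv (hsub hvT)

end IsMatching

end SimpleGraph.Subgraph

namespace KEPaper

open SimpleGraph

variable {V : Type*} {G : SimpleGraph V} {S : Set V}

theorem IsIndep.not_adj (hS : IsIndep G S) {a b : V} (ha : a ∈ S) (hb : b ∈ S) :
    ¬ G.Adj a b := by
  rcases eq_or_ne a b with rfl | hne
  · exact G.irrefl
  · exact hS ha hb hne

theorem exists_isMaxIndep [Finite V] (G : SimpleGraph V) : ∃ S, IsMaxIndep G S := by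
  have hbdd : BddAbove {n | ∃ S : Set V, IsIndep G S ∧ S.ncard = n} := by
    refine ⟨Nat.card V, ?_⟩
    rintro n ⟨S, -, rfl⟩
    exact Set.ncard_le_card S
  exact Nat.sSup_mem (s := {n | ∃ S : Set V, IsIndep G S ∧ S.ncard = n})
    ⟨0, ∅, by simp [IsIndep], Set.ncard_empty V⟩ hbdd

theorem exists_isMatching_ncard_edgeSet_eq [Finite V] (G : SimpleGraph V) :
    ∃ M : G.Subgraph, M.IsMatching ∧ M.edgeSet.ncard = matchNum G := by
  have hbdd : BddAbove {n | ∃ M : G.Subgraph, M.IsMatching ∧ M.edgeSet.ncard = n} := by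
    refine ⟨Nat.card (Sym2 V), ?_⟩
    rintro n ⟨M, -, rfl⟩
    exact Set.ncard_le_card M.edgeSet
  exact Nat.sSup_mem (s := {n | ∃ M : G.Subgraph, M.IsMatching ∧ M.edgeSet.ncard = n})
    ⟨0, ⊥, fun _ hv => by simp at hv, by simp⟩ hbdd

namespace KoenigEgervary

variable [Finite V] {M : G.Subgraph}

theorem ncard_compl (hG : KoenigEgervary G) (hS : IsMaxIndep G S) :
    Sᶜ.ncard = matchNum G := by
  have h := Set.ncard_add_ncard_compl S
  rw [hS.2, hG] at h
  omega

theorem preimage_partner_compl (hG : KoenigEgervary G) (hM : M.IsMatching)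
    (hMc : M.edgeSet.ncard = matchNum G) (hS : IsMaxIndep G S) :
    M.partner ⁻¹' Sᶜ = S ∩ M.verts := by
  have hcover : ∀ ⦃v w⦄, M.Adj v w → v ∈ Sᶜ ∨ w ∈ Sᶜ := fun _ _ h =>
    not_and_or.mp fun hvw => hS.1.not_adj hvw.1 hvw.2 (M.adj_sub h)
  rw [hM.preimage_partner_eq_of_ncard_le hcover (by rw [hG.ncard_compl hS, hMc]), compl_compl]

theorem compl_verts_subset (hG : KoenigEgervary G) (hM : M.IsMatching)
    (hMc : M.edgeSet.ncard = matchNum G) (hS : IsMaxIndep G S) : M.vertsᶜ ⊆ S := by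
  intro v hv
  by_contra hvS
  have hpv : v ∈ M.partner ⁻¹' Sᶜ := by
    rwa [Set.mem_preimage, Subgraph.partner_eq_self hv]
  rw [hG.preimage_partner_compl hM hMc hS] at hpv
  exact hvS hpv.1

theorem preimage_partner_iInter_compl (hG : KoenigEgervary G) (hM : M.IsMatching)
    (hMc : M.edgeSet.ncard = matchNum G) :
    M.partner ⁻¹' (⋂ S ∈ {S : Set V | IsMaxIndep G S}, Sᶜ) = core G ∩ M.verts := by
  obtain ⟨S₀, hS₀⟩ := exists_isMaxIndep G
  ext v
  have hpre : ∀ {S}, IsMaxIndep G S → (M.partner v ∈ Sᶜ ↔ v ∈ S ∩ M.verts) := fun hS =>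
    Set.ext_iff.mp (hG.preimage_partner_compl hM hMc hS) v
  simp only [core, Set.mem_preimage, Set.mem_iInter₂, Set.mem_ofPred_eq, Set.mem_inter_iff]
  exact ⟨fun h => ⟨fun S hS => ((hpre hS).mp (h S hS)).1, ((hpre hS₀).mp (h S₀ hS₀)).2⟩,
    fun ⟨hv, hvM⟩ S hS => (hpre hS).mpr ⟨hv S hS, hvM⟩⟩

end KoenigEgervary

theorem ncard_eq_ncard_inter_add_ncard_compl [Finite V] {X Y : Set V} (h : Yᶜ ⊆ X) :
    X.ncard = (X ∩ Y).ncard + Yᶜ.ncard := by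
  rw [← Set.ncard_inter_add_ncard_sdiff_eq_ncard X Y, Set.sdiff_eq_compl_inter,
    Set.inter_eq_left.mpr h]

/-- If `G` is a finite König–Egerváry graph, then
`α(G) + |⋂ {V(G) - S : S maximum independent}| = μ(G) + |core(G)|`. -/
theorem indepNum_add_iInter_compl_eq [Finite V] (G : SimpleGraph V)
    (hG : KoenigEgervary G) :
    indepNum G + (⋂ S ∈ {S : Set V | IsMaxIndep G S}, Sᶜ).ncard
      = matchNum G + (core G).ncard := by
  obtain ⟨S₀, hS₀⟩ := exists_isMaxIndep G
  obtain ⟨M, hM, hMc⟩ := exists_isMatching_ncard_edgeSet_eq G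
  have hS₀_matched : (S₀ ∩ M.verts).ncard = matchNum G := by
    rw [← hG.preimage_partner_compl hM hMc hS₀, hM.ncard_preimage_partner, hG.ncard_compl hS₀]
  have hcore_unmatched : M.vertsᶜ ⊆ core G :=
    Set.subset_iInter₂ fun _ hS => hG.compl_verts_subset hM hMc hS
  rw [← hM.ncard_preimage_partner, hG.preimage_partner_iInter_compl hM hMc, ← hS₀.2,
    ncard_eq_ncard_inter_add_ncard_compl (hG.compl_verts_subset hM hMc hS₀),
    ncard_eq_ncard_inter_add_ncard_compl hcore_unmatched, hS₀_matched]
  ring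

end KEPaper
end
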